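/- Let α < β with β − α < 2π and let δ > 0 satisfy 2δ < min(β − α, 2π − (β − α)); fix a real-valued s ∈ C^∞(ℝ) with supp s ⊆ [-δ, ∞) and s(t)² + s(-t)² = 1 for all t ∈ ℝ. For ξ ∈ ℝ and a continuous 2π-periodic function F : ℝ → ℝ, define (R_ξ F)(t) = Σ_{k∈ℤ} P_{[α+ξ+2πk, β+ξ+2πk]} F(t) (for each fixed t at most one summand is nonzero, since β − α + 2δ < 2π); R_ξ is the conjugate τ_z P_Q τ_{z^{-1}} by the rotation z = e^{iξ} of the smooth orthogonal projection P_Q onto the arc Q = {e^{it} : t ∈ [α, β]} of S¹. Then for every continuous 2π-periodic F : ℝ → ℝ and every t ∈ ℝ, (1/(2π)) ∫_0^{2π} (R_ξ F)(t) dξ = ((β − α)/(2π)) · F(t). -/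

import Mathlib

open MeasureTheory Real
noncomputable section

/-- The smooth projection `P_{[α,β]}` of Auscher–Weiss–Wickerhauser, with cutoff profile `s`
and smoothing parameter `δ`. -/
def Pab (s : ℝ → ℝ) (δ α β : ℝ) (f : ℝ → ℝ) (t : ℝ) : ℝ :=
  if t < α - δ then 0
  else if t ≤ α + δ then s (t - α) ^ 2 * f t + s (t - α) * s (α - t) * f (2 * α - t)
  else if t < β - δ then f t
  else if t ≤ β + δ then s (β - t) ^ 2 * f t - s (t - β) * s (β - t) * f (2 * β - t)
  else 0

/-- The conjugate `τ_z P_Q τ_{z⁻¹}` (with `z = e^{iξ}`) of the smooth projection onto the arc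
`Q = {e^{it} : t ∈ [α,β]}`, viewed as an operator on `2π`-periodic functions on `ℝ`: for each
fixed `t` at most one summand is nonzero. -/
def RQ (s : ℝ → ℝ) (δ α β ξ : ℝ) (F : ℝ → ℝ) (t : ℝ) : ℝ :=
  ∑' k : ℤ, Pab s δ (α + ξ + 2 * π * k) (β + ξ + 2 * π * k) F t

namespace SmoothProjAux

/-- Cross term profile. -/
def H (s F : ℝ → ℝ) (t u : ℝ) : ℝ := s (-u) * s u * F (t + 2 * u)

/-- Closed form for `ξ ↦ Pab s δ (α+ξ) (β+ξ) F t`. -/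
def G (s : ℝ → ℝ) (δ α β : ℝ) (F : ℝ → ℝ) (t ξ : ℝ) : ℝ :=
  s (min (β + ξ - t) δ) ^ 2 * s (min (t - α - ξ) δ) ^ 2 * F t
    + H s F t (ξ - (t - α)) - H s F t (ξ - (t - β))

lemma s_zero {s : ℝ → ℝ} {δ : ℝ} (hc : Continuous s)
    (hsupp : tsupport s ⊆ Set.Ici (-δ)) : ∀ x ≤ -δ, s x = 0 := by
  have h1 : Set.EqOn s 0 (Set.Iio (-δ)) := fun x hx =>
    image_eq_zero_of_notMem_tsupport fun hm => absurd (hsupp hm) (by simpa using not_le.2 hx)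
  have h2 : Set.EqOn s 0 (Set.Iic (-δ)) := by
    simpa [closure_Iio] using h1.closure hc continuous_const
  exact fun x hx => h2 hx

lemma s_one {s : ℝ → ℝ} {δ : ℝ} (hc : Continuous s)
    (hsupp : tsupport s ⊆ Set.Ici (-δ))
    (hpyth : ∀ t : ℝ, s t ^ 2 + s (-t) ^ 2 = 1) :
    ∀ x, δ ≤ x → s x ^ 2 = 1 := by
  intro x hx
  have h0 : s (-x) = 0 := s_zero hc hsupp _ (by linarith)
  have := hpyth x
  rw [h0] at this
  linarith

lemma Pab_eq_G {s F : ℝ → ℝ} {δ α β t : ℝ} (hδ : 0 < δ) (hδ1 : 2 * δ < β - α)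
    (hc : Continuous s) (hsupp : tsupport s ⊆ Set.Ici (-δ))
    (hpyth : ∀ t : ℝ, s t ^ 2 + s (-t) ^ 2 = 1) :
    ∀ ξ : ℝ, Pab s δ (α + ξ) (β + ξ) F t = G s δ α β F t ξ := by
  intro ξ
  have hz := s_zero hc hsupp
  have h1 := s_one hc hsupp hpyth
  unfold Pab G H
  split_ifs with c1 c2 c3 c4
  · -- t < α + ξ - δ, i.e. ξ > t - α + δ
    rw [min_eq_left (by linarith : t - α - ξ ≤ δ),
      hz (t - α - ξ) (by linarith),
      hz (-(ξ - (t - α))) (by linarith),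
      hz (-(ξ - (t - β))) (by linarith)]
    ring
  · -- α + ξ - δ ≤ t ≤ α + ξ + δ
    rw [min_eq_right (by linarith : δ ≤ β + ξ - t),
      min_eq_left (by linarith : t - α - ξ ≤ δ),
      h1 δ le_rfl,
      hz (-(ξ - (t - β))) (by linarith),
      show t - (α + ξ) = t - α - ξ by ring,
      show α + ξ - t = ξ - (t - α) by ring,
      show -(ξ - (t - α)) = t - α - ξ by ring,
      show 2 * (α + ξ) - t = t + 2 * (ξ - (t - α)) by ring]
    ring
  · -- middle: α + ξ + δ < t < β + ξ - δ
    rw [min_eq_right (by linarith : δ ≤ β + ξ - t),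
      min_eq_right (by linarith : δ ≤ t - α - ξ),
      h1 δ le_rfl,
      hz (ξ - (t - α)) (by linarith),
      hz (-(ξ - (t - β))) (by linarith)]
    ring
  · -- β + ξ - δ ≤ t ≤ β + ξ + δ
    rw [min_eq_left (by linarith : β + ξ - t ≤ δ),
      min_eq_right (by linarith : δ ≤ t - α - ξ),
      h1 δ le_rfl,
      hz (ξ - (t - α)) (by linarith),
      show t - (β + ξ) = -(ξ - (t - β)) by ring,
      show β + ξ - t = ξ - (t - β) by ring,
      show 2 * (β + ξ) - t = t + 2 * (ξ - (t - β)) by ring]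
    ring
  · -- t > β + ξ + δ
    rw [min_eq_left (by linarith : β + ξ - t ≤ δ),
      hz (β + ξ - t) (by linarith),
      hz (ξ - (t - α)) (by linarith),
      hz (ξ - (t - β)) (by linarith)]
    ring

lemma G_zero {s F : ℝ → ℝ} {δ α β t : ℝ} (hδ : 0 < δ) (hαβ : α < β)
    (hc : Continuous s) (hsupp : tsupport s ⊆ Set.Ici (-δ)) :
    ∀ ξ : ℝ, (ξ ≤ t - β - δ ∨ t - α + δ ≤ ξ) → G s δ α β F t ξ = 0 := by
  intro ξ hξ
  have hz := s_zero hc hsupp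
  unfold G H
  rcases hξ with h | h
  · rw [min_eq_left (by linarith : β + ξ - t ≤ δ),
      hz (β + ξ - t) (by linarith),
      hz (ξ - (t - α)) (by linarith),
      hz (ξ - (t - β)) (by linarith)]
    ring
  · rw [min_eq_left (by linarith : t - α - ξ ≤ δ),
      hz (t - α - ξ) (by linarith),
      hz (-(ξ - (t - α))) (by linarith),
      hz (-(ξ - (t - β))) (by linarith)]
    ring


lemma integral_sq {s : ℝ → ℝ} {δ : ℝ} (hc : Continuous s)
    (hpyth : ∀ t : ℝ, s t ^ 2 + s (-t) ^ 2 = 1) :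
    ∫ u in (-δ)..δ, s u ^ 2 = δ := by
  have hi : IntervalIntegrable (fun u => s u ^ 2) volume (-δ) δ :=
    (hc.pow 2).intervalIntegrable _ _
  have hi2 : IntervalIntegrable (fun u => s (-u) ^ 2) volume (-δ) δ :=
    ((hc.comp continuous_neg).pow 2).intervalIntegrable _ _
  have hsum : (∫ u in (-δ)..δ, (s u ^ 2 + s (-u) ^ 2)) = 2 * δ := by
    have : (fun u : ℝ => s u ^ 2 + s (-u) ^ 2) = fun _ => (1 : ℝ) :=
      funext fun u => hpyth u
    rw [this]
    simp
    ring
  rw [intervalIntegral.integral_add hi hi2] at hsum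
  have hneg : (∫ u in (-δ)..δ, s (-u) ^ 2) = ∫ u in (-δ)..δ, s u ^ 2 := by
    simpa using intervalIntegral.integral_comp_neg (a := -δ) (b := δ) (fun u => s u ^ 2)
  linarith

lemma integral_sq_neg {s : ℝ → ℝ} {δ : ℝ} (hc : Continuous s)
    (hpyth : ∀ t : ℝ, s t ^ 2 + s (-t) ^ 2 = 1) :
    ∫ u in (-δ)..δ, s (-u) ^ 2 = δ := by
  have hneg : (∫ u in (-δ)..δ, s (-u) ^ 2) = ∫ u in (-δ)..δ, s u ^ 2 := by
    simpa using intervalIntegral.integral_comp_neg (a := -δ) (b := δ) (fun u => s u ^ 2)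
  rw [hneg, integral_sq hc hpyth]

lemma H_cont {s F : ℝ → ℝ} {t : ℝ} (hc : Continuous s) (hF : Continuous F) :
    Continuous (H s F t) := by
  unfold H
  fun_prop

lemma H_zero {s F : ℝ → ℝ} {δ t : ℝ} (hc : Continuous s)
    (hsupp : tsupport s ⊆ Set.Ici (-δ)) :
    ∀ u : ℝ, (u ≤ -δ ∨ δ ≤ u) → H s F t u = 0 := by
  intro u hu
  have hz := s_zero hc hsupp
  unfold H
  rcases hu with h | h
  · rw [hz u (by linarith)]; ring
  · rw [hz (-u) (by linarith)]; ring

lemma G_cont {s F : ℝ → ℝ} {δ α β t : ℝ} (hc : Continuous s) (hF : Continuous F) :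
    Continuous (G s δ α β F t) := by
  unfold G H
  fun_prop

/-- The total integral of the cross term over any interval `[a,b] ⊇ [-δ,δ]` is
the fixed quantity `∫_{-δ}^{δ} H`. -/
lemma integral_H {s F : ℝ → ℝ} {δ t a b : ℝ} (hc : Continuous s) (hF : Continuous F)
    (hδ : 0 < δ) (hsupp : tsupport s ⊆ Set.Ici (-δ)) (ha : a ≤ -δ) (hb : δ ≤ b) :
    (∫ u in a..b, H s F t u) = ∫ u in (-δ)..δ, H s F t u := by
  have hint : ∀ x y : ℝ, IntervalIntegrable (H s F t) volume x y :=
    fun x y => (H_cont hc hF).intervalIntegrable _ _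
  have hδδ : -δ ≤ δ := by linarith
  have hzero1 : (∫ u in a..(-δ), H s F t u) = 0 := by
    rw [intervalIntegral.integral_congr (g := fun _ => (0:ℝ))
      (fun u hu => ?_)]
    · simp
    · rw [Set.uIcc_of_le ha] at hu
      exact H_zero hc hsupp u (Or.inl hu.2)
  have hzero2 : (∫ u in δ..b, H s F t u) = 0 := by
    rw [intervalIntegral.integral_congr (g := fun _ => (0:ℝ))
      (fun u hu => ?_)]
    · simp
    · rw [Set.uIcc_of_le hb] at hu
      exact H_zero hc hsupp u (Or.inr hu.1)
  have e1 : (∫ u in a..(-δ), H s F t u) + (∫ u in (-δ)..b, H s F t u)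
      = ∫ u in a..b, H s F t u :=
    intervalIntegral.integral_add_adjacent_intervals (hint _ _) (hint _ _)
  have e2 : (∫ u in (-δ)..δ, H s F t u) + (∫ u in δ..b, H s F t u)
      = ∫ u in (-δ)..b, H s F t u :=
    intervalIntegral.integral_add_adjacent_intervals (hint _ _) (hint _ _)
  rw [hzero1] at e1
  rw [hzero2] at e2
  linarith


lemma integral_G {s F : ℝ → ℝ} {δ α β t : ℝ} (hδ : 0 < δ) (hαβ : α < β)
    (hδ1 : 2 * δ < β - α) (hc : Continuous s) (hF : Continuous F)
    (hsupp : tsupport s ⊆ Set.Ici (-δ))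
    (hpyth : ∀ t : ℝ, s t ^ 2 + s (-t) ^ 2 = 1) :
    (∫ ξ in (t - β - δ)..(t - α + δ), G s δ α β F t ξ) = (β - α) * F t := by
  have hone := s_one hc hsupp hpyth δ le_rfl
  have hG1c : Continuous fun ξ : ℝ =>
      s (min (β + ξ - t) δ) ^ 2 * s (min (t - α - ξ) δ) ^ 2 * F t := by fun_prop
  have hqc : Continuous fun ξ : ℝ =>
      s (min (β + ξ - t) δ) ^ 2 * s (min (t - α - ξ) δ) ^ 2 := by fun_prop
  have hH1c : Continuous fun ξ : ℝ => H s F t (ξ - (t - α)) :=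
    (H_cont hc hF).comp (by fun_prop)
  have hH2c : Continuous fun ξ : ℝ => H s F t (ξ - (t - β)) :=
    (H_cont hc hF).comp (by fun_prop)
  have hx1 : (∫ ξ in (t - β - δ)..(t - α + δ), H s F t (ξ - (t - α)))
      = ∫ u in (-δ)..δ, H s F t u := by
    rw [intervalIntegral.integral_comp_sub_right (H s F t) (t - α),
      show t - β - δ - (t - α) = α - β - δ by ring,
      show t - α + δ - (t - α) = δ by ring]
    exact integral_H hc hF hδ hsupp (by linarith) le_rfl
  have hx2 : (∫ ξ in (t - β - δ)..(t - α + δ), H s F t (ξ - (t - β)))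
      = ∫ u in (-δ)..δ, H s F t u := by
    rw [intervalIntegral.integral_comp_sub_right (H s F t) (t - β),
      show t - β - δ - (t - β) = -δ by ring,
      show t - α + δ - (t - β) = β - α + δ by ring]
    exact integral_H hc hF hδ hsupp le_rfl (by linarith)
  have hmain : (∫ ξ in (t - β - δ)..(t - α + δ),
      s (min (β + ξ - t) δ) ^ 2 * s (min (t - α - ξ) δ) ^ 2) = β - α := by
    have hqi : ∀ a b : ℝ, IntervalIntegrable
        (fun ξ : ℝ => s (min (β + ξ - t) δ) ^ 2 * s (min (t - α - ξ) δ) ^ 2)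
        volume a b := fun a b => hqc.intervalIntegrable _ _
    have hA : (∫ ξ in (t - β - δ)..(t - β + δ),
        s (min (β + ξ - t) δ) ^ 2 * s (min (t - α - ξ) δ) ^ 2) = δ := by
      rw [intervalIntegral.integral_congr (g := fun ξ => s (ξ - (t - β)) ^ 2)
        (fun ξ hξ => ?_)]
      · rw [intervalIntegral.integral_comp_sub_right (fun u => s u ^ 2) (t - β),
          show t - β - δ - (t - β) = -δ by ring,
          show t - β + δ - (t - β) = δ by ring]
        exact integral_sq hc hpyth
      · rw [Set.uIcc_of_le (by linarith)] at hξ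
        obtain ⟨h1, h2⟩ := hξ
        simp only
        rw [min_eq_left (by linarith : β + ξ - t ≤ δ),
          min_eq_right (by linarith : δ ≤ t - α - ξ), hone,
          show β + ξ - t = ξ - (t - β) by ring]
        ring
    have hB : (∫ ξ in (t - β + δ)..(t - α - δ),
        s (min (β + ξ - t) δ) ^ 2 * s (min (t - α - ξ) δ) ^ 2) = β - α - 2 * δ := by
      rw [intervalIntegral.integral_congr (g := fun _ => (1 : ℝ))
        (fun ξ hξ => ?_)]
      · simp
        ring
      · rw [Set.uIcc_of_le (by linarith)] at hξ
        obtain ⟨h1, h2⟩ := hξ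
        simp only
        rw [min_eq_right (by linarith : δ ≤ β + ξ - t),
          min_eq_right (by linarith : δ ≤ t - α - ξ), hone]
        ring
    have hC : (∫ ξ in (t - α - δ)..(t - α + δ),
        s (min (β + ξ - t) δ) ^ 2 * s (min (t - α - ξ) δ) ^ 2) = δ := by
      rw [intervalIntegral.integral_congr (g := fun ξ => s (-(ξ - (t - α))) ^ 2)
        (fun ξ hξ => ?_)]
      · rw [intervalIntegral.integral_comp_sub_right (fun u => s (-u) ^ 2) (t - α),
          show t - α - δ - (t - α) = -δ by ring,
          show t - α + δ - (t - α) = δ by ring]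
        exact integral_sq_neg hc hpyth
      · rw [Set.uIcc_of_le (by linarith)] at hξ
        obtain ⟨h1, h2⟩ := hξ
        simp only
        rw [min_eq_right (by linarith : δ ≤ β + ξ - t),
          min_eq_left (by linarith : t - α - ξ ≤ δ), hone,
          show t - α - ξ = -(ξ - (t - α)) by ring]
        ring
    have e1 : (∫ ξ in (t - β - δ)..(t - β + δ),
          s (min (β + ξ - t) δ) ^ 2 * s (min (t - α - ξ) δ) ^ 2)
        + (∫ ξ in (t - β + δ)..(t - α + δ),
          s (min (β + ξ - t) δ) ^ 2 * s (min (t - α - ξ) δ) ^ 2)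
        = ∫ ξ in (t - β - δ)..(t - α + δ),
          s (min (β + ξ - t) δ) ^ 2 * s (min (t - α - ξ) δ) ^ 2 :=
      intervalIntegral.integral_add_adjacent_intervals (hqi _ _) (hqi _ _)
    have e2 : (∫ ξ in (t - β + δ)..(t - α - δ),
          s (min (β + ξ - t) δ) ^ 2 * s (min (t - α - ξ) δ) ^ 2)
        + (∫ ξ in (t - α - δ)..(t - α + δ),
          s (min (β + ξ - t) δ) ^ 2 * s (min (t - α - ξ) δ) ^ 2)
        = ∫ ξ in (t - β + δ)..(t - α + δ),
          s (min (β + ξ - t) δ) ^ 2 * s (min (t - α - ξ) δ) ^ 2 :=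
      intervalIntegral.integral_add_adjacent_intervals (hqi _ _) (hqi _ _)
    linarith
  simp only [G]
  rw [intervalIntegral.integral_sub (f := fun ξ => s (min (β + ξ - t) δ) ^ 2 * s (min (t - α - ξ) δ) ^ 2 * F t + H s F t (ξ - (t - α))) ((hG1c.add hH1c).intervalIntegrable _ _)
      (hH2c.intervalIntegrable _ _),
    intervalIntegral.integral_add (hG1c.intervalIntegrable _ _)
      (hH1c.intervalIntegrable _ _),
    hx1, hx2, intervalIntegral.integral_mul_const, hmain]
  ring


lemma sum_shift_integral {f : ℝ → ℝ} (hf : Continuous f) (c : ℝ) (k₁ : ℤ) (n : ℕ) :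
    (∑ k ∈ Finset.Icc k₁ (k₁ + (n : ℤ)),
        ∫ x in (c * (k : ℝ))..(c * (k : ℝ) + c), f x)
      = ∫ x in (c * (k₁ : ℝ))..(c * ((k₁ : ℝ) + (n : ℝ)) + c), f x := by
  induction n with
  | zero => simp
  | succ n ih =>
    have hins : Finset.Icc k₁ (k₁ + ((n : ℤ) + 1))
        = insert (k₁ + (n : ℤ) + 1) (Finset.Icc k₁ (k₁ + (n : ℤ))) := by
      ext x
      simp only [Finset.mem_Icc, Finset.mem_insert]
      omega
    have hnot : (k₁ + (n : ℤ) + 1) ∉ Finset.Icc k₁ (k₁ + (n : ℤ)) := by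
      simp only [Finset.mem_Icc]
      omega
    rw [show ((n + 1 : ℕ) : ℤ) = (n : ℤ) + 1 by push_cast; ring, hins,
      Finset.sum_insert hnot, ih]
    have hadj := intervalIntegral.integral_add_adjacent_intervals
      (a := c * (k₁ : ℝ)) (b := c * ((k₁ : ℝ) + (n : ℝ)) + c)
      (c := c * ((k₁ : ℝ) + (n : ℝ) + 1) + c) (f := f) (μ := volume)
      (hf.intervalIntegrable _ _) (hf.intervalIntegrable _ _)
    push_cast
    ring_nf at hadj ⊢
    linarith [hadj]

end SmoothProjAux

theorem circle_average_of_smooth_projection_onto_arc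
    (α β : ℝ) (hαβ : α < β) (hlt : β - α < 2 * π)
    (δ : ℝ) (hδ : 0 < δ) (hδ1 : 2 * δ < β - α) (hδ2 : 2 * δ < 2 * π - (β - α))
    (s : ℝ → ℝ) (hs : ContDiff ℝ (⊤ : ℕ∞) s) (hsupp : tsupport s ⊆ Set.Ici (-δ))
    (hpyth : ∀ t : ℝ, s t ^ 2 + s (-t) ^ 2 = 1)
    (F : ℝ → ℝ) (hF : Continuous F) (hper : Function.Periodic F (2 * π)) (t : ℝ) :
    (1 / (2 * π)) * ∫ ξ in (0 : ℝ)..(2 * π), RQ s δ α β ξ F t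
      = ((β - α) / (2 * π)) * F t := by
  have hπ : (0 : ℝ) < π := Real.pi_pos
  have h2π : (0 : ℝ) < 2 * π := by linarith
  have hscont : Continuous s := hs.continuous
  have hGc : Continuous (SmoothProjAux.G s δ α β F t) := SmoothProjAux.G_cont hscont hF
  have hPabG := SmoothProjAux.Pab_eq_G (F := F) (t := t) hδ hδ1 hscont hsupp hpyth
  have hG0 := SmoothProjAux.G_zero (F := F) (t := t) hδ hαβ hscont hsupp
  set k₁ : ℤ := ⌊(t - β - δ) / (2 * π)⌋ with hk₁def
  set k₂ : ℤ := ⌊(t - α + δ) / (2 * π)⌋ with hk₂def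
  have hk₁ : 2 * π * (k₁ : ℝ) ≤ t - β - δ := by
    have h := Int.floor_le ((t - β - δ) / (2 * π))
    rw [le_div_iff₀ h2π] at h
    linarith
  have hk₂ : t - α + δ ≤ 2 * π * ((k₂ : ℝ) + 1) := by
    have h := (Int.lt_floor_add_one ((t - α + δ) / (2 * π))).le
    rw [div_le_iff₀ h2π] at h
    push_cast at h ⊢
    linarith
  have hk12 : k₁ ≤ k₂ :=
    Int.floor_le_floor ((div_le_div_iff_of_pos_right h2π).mpr (by linarith))
  have step1 : Set.EqOn (fun ξ => RQ s δ α β ξ F t)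
      (fun ξ => ∑ k ∈ Finset.Icc k₁ k₂,
        SmoothProjAux.G s δ α β F t (ξ + 2 * π * (k : ℝ)))
      (Set.uIcc 0 (2 * π)) := by
    intro ξ hξ
    rw [Set.uIcc_of_le (by linarith)] at hξ
    obtain ⟨hξ0, hξ2⟩ := hξ
    simp only [RQ]
    rw [tsum_eq_sum (s := Finset.Icc k₁ k₂) ?_]
    · exact Finset.sum_congr rfl fun k _ => by
        rw [show α + ξ + 2 * π * (k : ℝ) = α + (ξ + 2 * π * (k : ℝ)) by ring,
          show β + ξ + 2 * π * (k : ℝ) = β + (ξ + 2 * π * (k : ℝ)) by ring, hPabG]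
    · intro k hk
      rw [show α + ξ + 2 * π * (k : ℝ) = α + (ξ + 2 * π * (k : ℝ)) by ring,
        show β + ξ + 2 * π * (k : ℝ) = β + (ξ + 2 * π * (k : ℝ)) by ring, hPabG]
      apply hG0
      rw [Finset.mem_Icc, not_and_or, not_le, not_le] at hk
      rcases hk with h | h
      · left
        have hcast : (k : ℝ) ≤ (k₁ : ℝ) - 1 := by exact_mod_cast (by omega : k ≤ k₁ - 1)
        have hmul := mul_le_mul_of_nonneg_left hcast (by linarith : (0 : ℝ) ≤ 2 * π)
        nlinarith [hmul]
      · right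
        have hcast : (k₂ : ℝ) + 1 ≤ (k : ℝ) := by exact_mod_cast (by omega : k₂ + 1 ≤ k)
        have hmul := mul_le_mul_of_nonneg_left hcast (by linarith : (0 : ℝ) ≤ 2 * π)
        nlinarith [hmul]
  have key : (∫ ξ in (0 : ℝ)..(2 * π), RQ s δ α β ξ F t) = (β - α) * F t := by
    rw [intervalIntegral.integral_congr step1,
      intervalIntegral.integral_finset_sum
        (fun k _ => by exact ((hGc.comp (by fun_prop)).intervalIntegrable _ _))]
    have hsummand : ∀ k ∈ Finset.Icc k₁ k₂,
        (∫ ξ in (0 : ℝ)..(2 * π), SmoothProjAux.G s δ α β F t (ξ + 2 * π * (k : ℝ)))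
          = ∫ x in (2 * π * (k : ℝ))..(2 * π * (k : ℝ) + 2 * π),
              SmoothProjAux.G s δ α β F t x := by
      intro k _
      rw [intervalIntegral.integral_comp_add_right
        (SmoothProjAux.G s δ α β F t) (2 * π * (k : ℝ)),
        show (0 : ℝ) + 2 * π * (k : ℝ) = 2 * π * (k : ℝ) by ring,
        show 2 * π + 2 * π * (k : ℝ) = 2 * π * (k : ℝ) + 2 * π by ring]
    rw [Finset.sum_congr rfl hsummand]
    obtain ⟨n, hn⟩ : ∃ n : ℕ, k₂ = k₁ + (n : ℤ) := ⟨(k₂ - k₁).toNat, by omega⟩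
    rw [hn, SmoothProjAux.sum_shift_integral hGc (2 * π) k₁ n]
    have hcastn : (k₂ : ℝ) = (k₁ : ℝ) + (n : ℝ) := by exact_mod_cast hn
    have hend : t - α + δ ≤ 2 * π * ((k₁ : ℝ) + (n : ℝ)) + 2 * π := by
      rw [hcastn] at hk₂
      linarith
    have hint : ∀ a b : ℝ, IntervalIntegrable (SmoothProjAux.G s δ α β F t) volume a b :=
      fun a b => hGc.intervalIntegrable _ _
    have hz1 : (∫ x in (2 * π * (k₁ : ℝ))..(t - β - δ),
        SmoothProjAux.G s δ α β F t x) = 0 := by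
      rw [intervalIntegral.integral_congr (g := fun _ => (0 : ℝ)) (fun x hx => ?_)]
      · simp
      · rw [Set.uIcc_of_le hk₁] at hx
        exact hG0 x (Or.inl hx.2)
    have hz2 : (∫ x in (t - α + δ)..(2 * π * ((k₁ : ℝ) + (n : ℝ)) + 2 * π),
        SmoothProjAux.G s δ α β F t x) = 0 := by
      rw [intervalIntegral.integral_congr (g := fun _ => (0 : ℝ)) (fun x hx => ?_)]
      · simp
      · rw [Set.uIcc_of_le hend] at hx
        exact hG0 x (Or.inr hx.1)
    have e1 : (∫ x in (2 * π * (k₁ : ℝ))..(t - β - δ), SmoothProjAux.G s δ α β F t x)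
        + (∫ x in (t - β - δ)..(2 * π * ((k₁ : ℝ) + (n : ℝ)) + 2 * π),
            SmoothProjAux.G s δ α β F t x)
        = ∫ x in (2 * π * (k₁ : ℝ))..(2 * π * ((k₁ : ℝ) + (n : ℝ)) + 2 * π),
            SmoothProjAux.G s δ α β F t x :=
      intervalIntegral.integral_add_adjacent_intervals (hint _ _) (hint _ _)
    have e2 : (∫ x in (t - β - δ)..(t - α + δ), SmoothProjAux.G s δ α β F t x)
        + (∫ x in (t - α + δ)..(2 * π * ((k₁ : ℝ) + (n : ℝ)) + 2 * π),
            SmoothProjAux.G s δ α β F t x)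
        = ∫ x in (t - β - δ)..(2 * π * ((k₁ : ℝ) + (n : ℝ)) + 2 * π),
            SmoothProjAux.G s δ α β F t x :=
      intervalIntegral.integral_add_adjacent_intervals (hint _ _) (hint _ _)
    have hGint := SmoothProjAux.integral_G (s := s) (F := F) (t := t)
      hδ hαβ hδ1 hscont hF hsupp hpyth
    linarith [e1, e2, hz1, hz2, hGint]
  rw [key]
  field_simp

end
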